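/- Fix r ≥ 2. For any partition λ, the number of cells of color i in the skew diagram λ/core_r(λ) is independent of i ∈ ℤ/rℤ, and equals the total size |quot_r(λ)| of the r-quotient of λ. -/

import Mathlib

/-- Two cells are (edge-)adjacent. -/
def Adj (a b : ℕ × ℕ) : Prop :=
  (a.1 = b.1 ∧ (a.2 + 1 = b.2 ∨ b.2 + 1 = a.2)) ∨
  (a.2 = b.2 ∧ (a.1 + 1 = b.1 ∨ b.1 + 1 = a.1))

/-- A set of cells is connected (any two cells are joined by a path of
edge-adjacent cells inside the set). -/
def ConnectedCells (s : Set (ℕ × ℕ)) : Prop :=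
  ∀ x ∈ s, ∀ y ∈ s, Relation.ReflTransGen (fun a b => Adj a b ∧ a ∈ s ∧ b ∈ s) x y

/-- `ν` is obtained from `μ` by removing a ribbon (rim hook) of length `r`:
the skew shape `μ/ν` has `r` cells, is connected, and contains no 2×2 square. -/
def IsRibbonOf (r : ℕ) (μ ν : YoungDiagram) : Prop :=
  ν.cells ⊆ μ.cells ∧ (μ.cells \ ν.cells).card = r ∧
  ConnectedCells ((μ.cells : Set (ℕ × ℕ)) \ (ν.cells : Set (ℕ × ℕ))) ∧
  ∀ i j : ℕ, ¬ ((i, j) ∈ μ.cells \ ν.cells ∧ (i + 1, j) ∈ μ.cells \ ν.cells ∧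
      (i, j + 1) ∈ μ.cells \ ν.cells ∧ (i + 1, j + 1) ∈ μ.cells \ ν.cells)

/-- An `r`-core is a partition with no removable ribbon of length `r`. -/
def IsRCore (r : ℕ) (μ : YoungDiagram) : Prop := ∀ ν, ¬ IsRibbonOf r μ ν

/-- The beta-set of a partition. -/
def betaSet (μ : YoungDiagram) : Set ℤ :=
  {n | ∃ i : ℕ, n = (μ.rowLen i : ℤ) - (i + 1)}

/-- `ν` is the `r`-core of `μ`: it is reached from `μ` by successively
removing `r`-ribbons, and has no `r`-ribbon left. -/
def ReachesCore (r : ℕ) (μ ν : YoungDiagram) : Prop :=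
  Relation.ReflTransGen (fun a b => IsRibbonOf r a b) μ ν ∧ IsRCore r ν

/-- The total size `|quot_r(μ)|` of the `r`-quotient of `μ`, read off from the
Maya diagram: it is the number of pairs `(s, t)` with `s` in the beta-set,
`t` not in the beta-set, `t < s` and `s ≡ t (mod r)`. -/
noncomputable def quotTotal (r : ℕ) (μ : YoungDiagram) : ℕ :=
  {p : ℤ × ℤ | p.1 ∈ betaSet μ ∧ p.2 ∉ betaSet μ ∧ p.2 < p.1 ∧
    (r : ℤ) ∣ (p.1 - p.2)}.ncard

/-- The color of a cell `(row, column)`: its content `row - column` mod `r`. -/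
def cellColor (r : ℕ) (c : ℕ × ℕ) : ZMod r := (((c.1 : ℤ) - (c.2 : ℤ) : ℤ) : ZMod r)

/-!
Work with beta-sets (Maya diagrams). Removing an `r`-ribbon from `λ` moves one bead of the
beta-set from a position `s` down to the empty position `s - r`, and conversely every such move
comes from removing a ribbon. The move lowers the number of bead/gap pairs counted by `quotTotal`
by exactly one: the transposition of `s` and `s - r` matches the pairs before and after the move,
except the pair `(s, s - r)`. The content `row - column` maps an `r`-ribbon bijectively onto `r`
consecutive integers, so every ribbon has exactly one cell of each colour. An `r`-core admits no
move, so its beta-set is stable under `s ↦ s - r` and its pair count vanishes. Summing over the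
ribbons removed on the way from `λ` to its core gives the theorem.
-/

lemma ncard_Ico_add_inter_intCast_eq_one {r : ℕ} (hr : 0 < r) (m : ℤ) (i : ZMod r) :
    (Set.Ico m (m + r) ∩ {c : ℤ | (c : ZMod r) = i}).ncard = 1 := by
  obtain ⟨k, rfl⟩ := ZMod.intCast_surjective i
  have hr' : (0 : ℤ) < r := by exact_mod_cast hr
  refine Set.ncard_eq_one.mpr ⟨toIcoMod hr' m k, Set.ext fun c => ?_⟩
  rw [Set.mem_singleton_iff, eq_comm, toIcoMod_eq_iff, Set.mem_inter_iff, Set.mem_ofPred_eq,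
    ZMod.intCast_eq_intCast_iff_dvd_sub]
  refine and_congr_right fun _ => ⟨fun ⟨z, hz⟩ => ⟨z, ?_⟩, fun ⟨z, hz⟩ => ⟨z, ?_⟩⟩ <;>
    simp only [smul_eq_mul] at * <;> linarith

lemma Adj.symm {x y : ℕ × ℕ} (h : Adj x y) : Adj y x := by
  unfold Adj at *
  omega

lemma connectedCells_of_descent {S : Set (ℕ × ℕ)} (z : ℕ × ℕ) (f : ℕ × ℕ → ℕ)
    (hdesc : ∀ x ∈ S, x ≠ z → ∃ y ∈ S, Adj x y ∧ f y < f x) : ConnectedCells S := by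
  let R : ℕ × ℕ → ℕ × ℕ → Prop := fun a b => Adj a b ∧ a ∈ S ∧ b ∈ S
  have hR : Std.Symm R := ⟨fun _ _ h => ⟨h.1.symm, h.2.2, h.2.1⟩⟩
  have hz : ∀ n, ∀ x ∈ S, f x = n → Relation.ReflTransGen R x z := by
    intro n
    induction n using Nat.strong_induction_on with
    | _ n ih =>
      intro x hx hfx
      by_cases hxz : x = z
      · exact hxz ▸ .refl
      obtain ⟨y, hy, hxy, hfy⟩ := hdesc x hx hxz
      exact .head ⟨hxy, hx, hy⟩ (ih (f y) (hfx ▸ hfy) y hy rfl)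
  intro x hx y hy
  exact (hz _ x hx rfl).trans (Relation.ReflTransGen.stdSymm.symm _ _ (hz _ y hy rfl))

lemma exists_crossing_of_reflTransGen {S : Set (ℕ × ℕ)} {x y : ℕ × ℕ}
    (h : Relation.ReflTransGen (fun a b => Adj a b ∧ a ∈ S ∧ b ∈ S) x y) {i : ℕ}
    (hxi : x.1 ≤ i) (hiy : i < y.1) : ∃ j, (i, j) ∈ S ∧ (i + 1, j) ∈ S := by
  induction h with
  | refl => omega
  | @tail z w _ hzw ih =>
    by_cases hiz : i < z.1
    · exact ih hiz
    obtain ⟨hadj, hz, hw⟩ := hzw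
    obtain ⟨z1, z2⟩ := z
    obtain ⟨w1, w2⟩ := w
    have : z1 = i ∧ w1 = i + 1 ∧ w2 = z2 := by unfold Adj at hadj; dsimp only at *; omega
    obtain ⟨rfl, rfl, rfl⟩ := this
    exact ⟨_, hz, hw⟩

namespace YoungDiagram

variable {μ ν : YoungDiagram}

def beta (μ : YoungDiagram) (i : ℕ) : ℤ := μ.rowLen i - (i + 1)

lemma beta_strictAnti (μ : YoungDiagram) : StrictAnti μ.beta :=
  strictAnti_nat_of_succ_lt fun i => by
    have := μ.rowLen_anti i (i + 1) i.le_succ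
    simp only [beta]
    omega

lemma mem_betaSet {t : ℤ} : t ∈ betaSet μ ↔ ∃ i, t = μ.beta i := Iff.rfl

lemma beta_mem_betaSet (μ : YoungDiagram) (i : ℕ) : μ.beta i ∈ betaSet μ := ⟨i, rfl⟩

lemma beta_le_beta_zero (μ : YoungDiagram) (i : ℕ) : μ.beta i ≤ μ.beta 0 :=
  μ.beta_strictAnti.antitone i.zero_le

lemma beta_eq_of_colLen_le {i : ℕ} (hi : μ.colLen 0 ≤ i) :
    μ.beta i = -(i + 1) := by
  have : μ.rowLen i = 0 := by
    by_contra h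
    have := mem_iff_lt_colLen.mp (mem_iff_lt_rowLen.mpr (Nat.pos_of_ne_zero h))
    omega
  simp [beta, this]

lemma mem_betaSet_of_lt {t : ℤ} (ht : t < -μ.colLen 0) : t ∈ betaSet μ :=
  ⟨(-t - 1).toNat, by
    show t = μ.beta _
    rw [beta_eq_of_colLen_le (by omega)]
    omega⟩

lemma exists_beta_succ_le_lt {t : ℤ} (ht : t < μ.beta 0) :
    ∃ i, μ.beta (i + 1) ≤ t ∧ t < μ.beta i := by
  have hex : ∃ n, μ.beta n ≤ t := ⟨(μ.beta 0 - t).toNat, by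
    have := μ.rowLen_anti 0 (μ.beta 0 - t).toNat (Nat.zero_le _)
    simp only [beta] at ht this ⊢
    omega⟩
  obtain ⟨i, hi⟩ : ∃ i, Nat.find hex = i + 1 :=
    Nat.exists_eq_add_one.mpr (Nat.pos_of_ne_zero fun h => by
      have := Nat.find_spec hex; rw [h] at this; omega)
  refine ⟨i, hi ▸ Nat.find_spec hex, not_le.mp (Nat.find_min hex (by omega))⟩


lemma rowLen_le_of_le (h : ν ≤ μ) (i : ℕ) : ν.rowLen i ≤ μ.rowLen i := by
  by_contra hlt
  have := mem_iff_lt_rowLen.mp (h (mem_iff_lt_rowLen.mpr (not_le.mp hlt)))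
  omega

lemma mem_cells_sdiff {x : ℕ × ℕ} :
    x ∈ μ.cells \ ν.cells ↔ ν.rowLen x.1 ≤ x.2 ∧ x.2 < μ.rowLen x.1 := by
  rw [Finset.mem_sdiff, mem_cells, mem_cells, mem_iff_lt_rowLen, mem_iff_lt_rowLen]
  omega

lemma mem_coe_cells_sdiff {x : ℕ × ℕ} :
    x ∈ (μ.cells : Set (ℕ × ℕ)) \ ν.cells ↔ ν.rowLen x.1 ≤ x.2 ∧ x.2 < μ.rowLen x.1 := by
  rw [← Finset.coe_sdiff, Finset.mem_coe, mem_cells_sdiff]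

def content (x : ℕ × ℕ) : ℤ := (x.1 : ℤ) - x.2

/-- `μ / ν` is a ribbon occupying exactly the rows `a, …, b`; consecutive rows of it share
exactly one column. -/
structure IsRibbonOnRows (μ ν : YoungDiagram) (a b : ℕ) : Prop where
  le : a ≤ b
  rowLen_succ : ∀ i, a ≤ i → i < b → ν.rowLen i + 1 = μ.rowLen (i + 1)
  rowLen_lt : ν.rowLen b < μ.rowLen b
  rowLen_eq : ∀ i, i < a ∨ b < i → ν.rowLen i = μ.rowLen i

namespace IsRibbonOnRows

variable {a b : ℕ}

lemma rowLen_le (h : IsRibbonOnRows μ ν a b) (i : ℕ) : ν.rowLen i ≤ μ.rowLen i := by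
  rcases lt_or_ge i a with hi | hi
  · exact (h.rowLen_eq i (.inl hi)).le
  rcases lt_trichotomy i b with hib | rfl | hib
  · have := h.rowLen_succ i hi hib
    have := μ.rowLen_anti i (i + 1) (by omega)
    omega
  · exact h.rowLen_lt.le
  · exact (h.rowLen_eq i (.inr hib)).le

lemma subset (h : IsRibbonOnRows μ ν a b) : ν.cells ⊆ μ.cells := fun x hx => by
  obtain ⟨i, j⟩ := x
  rw [mem_cells, mem_iff_lt_rowLen] at hx ⊢
  exact hx.trans_le (h.rowLen_le i)

lemma mem_rows (h : IsRibbonOnRows μ ν a b) {x : ℕ × ℕ}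
    (hx : ν.rowLen x.1 ≤ x.2 ∧ x.2 < μ.rowLen x.1) : a ≤ x.1 ∧ x.1 ≤ b := by
  by_contra hout
  have := h.rowLen_eq x.1 (by omega)
  omega

lemma beta_lt (h : IsRibbonOnRows μ ν a b) : ν.beta b < μ.beta b := by
  have := h.rowLen_lt
  simp only [beta]
  omega

lemma beta_succ (h : IsRibbonOnRows μ ν a b) {i : ℕ} (hai : a ≤ i) (hib : i < b) :
    ν.beta i = μ.beta (i + 1) := by
  have := h.rowLen_succ i hai hib
  simp only [beta]
  omega

lemma beta_eq (h : IsRibbonOnRows μ ν a b) {i : ℕ} (hi : i < a ∨ b < i) :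
    ν.beta i = μ.beta i := by
  simp only [beta, h.rowLen_eq i hi]

lemma content_lt_content (h : IsRibbonOnRows μ ν a b) {x y : ℕ × ℕ}
    (hx : ν.rowLen x.1 ≤ x.2 ∧ x.2 < μ.rowLen x.1) (hy : ν.rowLen y.1 ≤ y.2 ∧ y.2 < μ.rowLen y.1)
    (hxy : x.1 < y.1) : content x < content y := by
  have hx' := h.mem_rows hx
  have hy' := h.mem_rows hy
  have := h.beta_succ hx'.1 (hxy.trans_le hy'.2)
  have := μ.beta_strictAnti.antitone (show x.1 + 1 ≤ y.1 by omega)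
  simp only [beta, content] at *
  omega

lemma surjOn_content (h : IsRibbonOnRows μ ν a b) :
    Set.SurjOn content ((μ.cells : Set (ℕ × ℕ)) \ ν.cells) (Set.Ico (-μ.beta a) (-ν.beta b)) := by
  intro c hc
  rw [Set.mem_Ico] at hc
  have hμ := μ.beta_strictAnti
  obtain ⟨i, hi, hi'⟩ := exists_beta_succ_le_lt (μ := μ) (t := -c - 1)
    (by have := hμ.antitone a.zero_le; omega)
  have hai : a ≤ i := by
    by_contra
    have := hμ.antitone (show i + 1 ≤ a by omega)
    omega
  have hib : i ≤ b := by
    by_contra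
    have := hμ.antitone (show b + 1 ≤ i by omega)
    have := ν.beta_strictAnti (show b < b + 1 by omega)
    have := h.beta_eq (i := b + 1) (.inr (by omega))
    omega
  have hνi : ν.beta i ≤ -c - 1 := by
    rcases hib.lt_or_eq with hib | rfl
    · rw [h.beta_succ hai hib]
      exact hi
    · omega
  refine ⟨(i, (i - c).toNat), mem_coe_cells_sdiff.mpr ?_, ?_⟩ <;>
    simp only [beta, content] at hi' hνi ⊢ <;> omega

lemma bijOn_content (h : IsRibbonOnRows μ ν a b) :
    Set.BijOn content ((μ.cells : Set (ℕ × ℕ)) \ ν.cells) (Set.Ico (-μ.beta a) (-ν.beta b)) := by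
  refine ⟨fun x hx => ?_, fun x hx y hy hxy => ?_, h.surjOn_content⟩
  · rw [mem_coe_cells_sdiff] at hx
    have hrows := h.mem_rows hx
    have := μ.beta_strictAnti.antitone hrows.1
    have := ν.beta_strictAnti.antitone hrows.2
    simp only [beta, content, Set.mem_Ico] at *
    omega
  · rw [mem_coe_cells_sdiff] at hx hy
    rcases lt_trichotomy x.1 y.1 with hlt | heq | hlt
    · exact absurd hxy (h.content_lt_content hx hy hlt).ne
    · simp only [content] at hxy
      exact Prod.ext heq (by omega)
    · exact absurd hxy (h.content_lt_content hy hx hlt).ne'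

lemma card_cells_sdiff (h : IsRibbonOnRows μ ν a b) :
    ((μ.cells \ ν.cells).card : ℤ) = μ.beta a - ν.beta b := by
  have hcard := h.bijOn_content.ncard_eq
  rw [← Finset.coe_sdiff, Set.ncard_coe_finset, ← Finset.coe_Ico, Set.ncard_coe_finset,
    Int.card_Ico] at hcard
  have := h.beta_lt
  have := μ.beta_strictAnti.antitone h.le
  omega

lemma ncard_cellColor_eq_one {r : ℕ} (h : IsRibbonOnRows μ ν a b) (hr : 0 < r)
    (hlen : μ.beta a - ν.beta b = r) (i : ZMod r) :
    {x : ℕ × ℕ | x ∈ μ ∧ x ∉ ν ∧ cellColor r x = i}.ncard = 1 := by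
  have hset : {x : ℕ × ℕ | x ∈ μ ∧ x ∉ ν ∧ cellColor r x = i} =
      ((μ.cells : Set (ℕ × ℕ)) \ ν.cells) ∩ content ⁻¹' {c | (c : ZMod r) = i} := by
    ext x
    simp only [Set.mem_ofPred_eq, Set.mem_inter_iff, Set.mem_sdiff, Finset.mem_coe, mem_cells,
      Set.mem_preimage, and_assoc]
    rfl
  rw [hset, ← (h.bijOn_content.injOn.mono Set.inter_subset_left).ncard_image,
    Set.image_inter_preimage, h.bijOn_content.image_eq, show -ν.beta b = -μ.beta a + r by omega]
  exact ncard_Ico_add_inter_intCast_eq_one hr _ i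

lemma beta_notMem_betaSet (h : IsRibbonOnRows μ ν a b) : ν.beta b ∉ betaSet μ := by
  rintro ⟨j, hj⟩
  have h1 := h.beta_lt
  have h2 : μ.beta (b + 1) < ν.beta b := by
    rw [← h.beta_eq (.inr (lt_add_one b))]
    exact ν.beta_strictAnti (lt_add_one b)
  rw [hj] at h1 h2
  have := μ.beta_strictAnti.lt_iff_gt.mp h1
  have := μ.beta_strictAnti.lt_iff_gt.mp h2
  omega

lemma betaSet_eq (h : IsRibbonOnRows μ ν a b) :
    betaSet ν = insert (ν.beta b) (betaSet μ \ {μ.beta a}) := by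
  have hinj := μ.beta_strictAnti.injective
  ext t
  simp only [Set.mem_insert_iff, Set.mem_sdiff, Set.mem_singleton_iff, mem_betaSet]
  constructor
  · rintro ⟨i, rfl⟩
    rcases lt_trichotomy i b with hib | rfl | hbi
    · right
      rcases lt_or_ge i a with hia | hai
      · rw [h.beta_eq (.inl hia)]
        exact ⟨⟨i, rfl⟩, fun e => by have := hinj e; omega⟩
      · rw [h.beta_succ hai hib]
        exact ⟨⟨i + 1, rfl⟩, fun e => by have := hinj e; omega⟩
    · exact .inl rfl
    · right
      rw [h.beta_eq (.inr hbi)]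
      exact ⟨⟨i, rfl⟩, fun e => by have := hinj e; have := h.le; omega⟩
  · rintro (rfl | ⟨⟨j, rfl⟩, hja⟩)
    · exact ⟨b, rfl⟩
    have hja : j ≠ a := fun e => hja (e ▸ rfl)
    rcases lt_or_ge j a with hja' | haj
    · exact ⟨j, (h.beta_eq (.inl hja')).symm⟩
    rcases le_or_gt j b with hjb | hbj
    · exact ⟨j - 1, by rw [h.beta_succ (by omega) (by omega), Nat.sub_add_cancel (by omega)]⟩
    · exact ⟨j, (h.beta_eq (.inr hbj)).symm⟩

lemma isRibbonOf (h : IsRibbonOnRows μ ν a b) {r : ℕ} (hlen : μ.beta a - ν.beta b = r) :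
    IsRibbonOf r μ ν := by
  refine ⟨h.subset, by have := h.card_cells_sdiff; omega, ?_, ?_⟩
  · refine connectedCells_of_descent (b, ν.rowLen b) (fun x => x.2 + (b - x.1))
      fun x hx hxb => ?_
    rw [mem_coe_cells_sdiff] at hx
    have hrows := h.mem_rows hx
    obtain ⟨i, j⟩ := x
    dsimp only at hx hrows ⊢
    by_cases hj : ν.rowLen i < j
    · exact ⟨(i, j - 1), mem_coe_cells_sdiff.mpr (by dsimp only; omega), by unfold Adj; omega,
        by omega⟩
    have hib : i < b := by
      by_contra
      obtain rfl : i = b := by omega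
      exact hxb (Prod.ext rfl (by dsimp only; omega))
    have := h.rowLen_succ i hrows.1 hib
    have := ν.rowLen_anti i (i + 1) (by omega)
    exact ⟨(i + 1, j), mem_coe_cells_sdiff.mpr (by dsimp only; omega), by unfold Adj; omega,
      by omega⟩
  · rintro i j ⟨h1, -, -, h4⟩
    rw [mem_cells_sdiff] at h1 h4
    have := h.mem_rows h1
    have := h.mem_rows h4
    have := h.rowLen_succ i (by omega) (by omega)
    dsimp only at *
    omega

end IsRibbonOnRows

lemma exists_rowLen_eq (g : ℕ → ℕ) (hg : Antitone g) (hle : ∀ i, g i ≤ μ.rowLen i) :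
    ∃ ν : YoungDiagram, ∀ i, ν.rowLen i = g i := by
  refine ⟨⟨μ.cells.filter fun x => x.2 < g x.1, fun x y hxy hy => ?_⟩, fun i => ?_⟩
  · simp only [Finset.coe_filter, Set.mem_ofPred_eq] at hy ⊢
    exact ⟨μ.isLowerSet hxy hy.1, hxy.2.trans_lt (hy.2.trans_le (hg hxy.1))⟩
  · refine eq_of_forall_lt_iff fun j => ?_
    rw [← mem_iff_lt_rowLen]
    change (i, j) ∈ μ.cells.filter (fun x => x.2 < g x.1) ↔ j < g i
    rw [Finset.mem_filter, mem_cells, mem_iff_lt_rowLen]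
    have := hle i
    dsimp only
    omega

lemma exists_isRibbonOnRows {a b : ℕ} {t : ℤ} (hab : a ≤ b) (ht : μ.beta (b + 1) < t)
    (ht' : t < μ.beta b) : ∃ ν, IsRibbonOnRows μ ν a b ∧ ν.beta b = t := by
  obtain ⟨n, hn⟩ : ∃ n : ℕ, t + b + 1 = n :=
    Int.eq_ofNat_of_zero_le (by simp only [beta] at ht; omega)
  have hnb : n < μ.rowLen b := by simp only [beta] at ht'; omega
  have hnb' : μ.rowLen (b + 1) ≤ n := by simp only [beta] at ht; omega
  let g : ℕ → ℕ := fun i =>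
    if a ≤ i ∧ i < b then μ.rowLen (i + 1) - 1 else if i = b then n else μ.rowLen i
  have hg : Antitone g := antitone_nat_of_succ_le fun i => by
    have := μ.rowLen_anti i (i + 1) (by omega)
    have := μ.rowLen_anti (i + 1) (i + 1 + 1) (by omega)
    have := μ.rowLen_anti (i + 1) b
    have : i = b → μ.rowLen (i + 1) = μ.rowLen (b + 1) := by rintro rfl; rfl
    have : i + 1 = b → μ.rowLen (i + 1) = μ.rowLen b := by rintro rfl; rfl
    simp only [g]
    split_ifs <;> omega
  obtain ⟨ν, hν⟩ := exists_rowLen_eq (μ := μ) g hg fun i => by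
    have := μ.rowLen_anti i (i + 1) (by omega)
    have : i = b → μ.rowLen i = μ.rowLen b := by rintro rfl; rfl
    simp only [g]
    split_ifs <;> omega
  refine ⟨ν, ⟨hab, fun i hai hib => ?_, ?_, fun i hi => ?_⟩, ?_⟩
  · have := μ.rowLen_anti (i + 1) b (by omega)
    simp only [hν, g, if_pos (And.intro hai hib)]
    omega
  · simp only [hν, g]
    split_ifs <;> omega
  · simp only [hν, g]
    split_ifs <;> omega
  · simp only [beta, hν, g]
    split_ifs <;> omega

lemma exists_isRibbonOf {r : ℕ} (hr : 0 < r) {s : ℤ} (hs : s ∈ betaSet μ)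
    (hsr : s - r ∉ betaSet μ) : ∃ ν, IsRibbonOf r μ ν := by
  obtain ⟨a, rfl⟩ := hs
  obtain ⟨b, hb, hb'⟩ := exists_beta_succ_le_lt (μ := μ) (t := μ.beta a - r)
    (by have := μ.beta_le_beta_zero a; omega)
  have hb : μ.beta (b + 1) < μ.beta a - r :=
    hb.lt_of_ne fun e => hsr (e ▸ μ.beta_mem_betaSet (b + 1))
  have hab : a ≤ b := by
    by_contra
    have := μ.beta_strictAnti.antitone (show b + 1 ≤ a by omega)
    omega
  obtain ⟨ν, hν, hνb⟩ := exists_isRibbonOnRows hab hb hb'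
  exact ⟨ν, hν.isRibbonOf (by omega)⟩

end YoungDiagram

section

open YoungDiagram

variable {μ ν : YoungDiagram}

lemma IsRibbonOf.exists_isRibbonOnRows {r : ℕ} (h : IsRibbonOf r μ ν) (hr : 0 < r) :
    ∃ a b, IsRibbonOnRows μ ν a b ∧ μ.beta a - ν.beta b = r := by
  obtain ⟨hsub, hcard, hconn, hsq⟩ := h
  have hne : (μ.cells \ ν.cells).Nonempty := Finset.card_pos.mp (hcard ▸ hr)
  obtain ⟨xa, hxa, hmin⟩ := (μ.cells \ ν.cells).exists_min_image Prod.fst hne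
  obtain ⟨xb, hxb, hmax⟩ := (μ.cells \ ν.cells).exists_max_image Prod.fst hne
  have hrows : IsRibbonOnRows μ ν xa.1 xb.1 := by
    refine ⟨hmin xb hxb, fun i hai hib => ?_, ?_, fun i hi => ?_⟩
    · -- connectedness gives a column shared by rows `i` and `i + 1`; two would give a 2 × 2 square
      obtain ⟨j, hj, hj'⟩ := exists_crossing_of_reflTransGen
        (hconn xa (mem_coe_cells_sdiff.mpr (mem_cells_sdiff.mp hxa))
          xb (mem_coe_cells_sdiff.mpr (mem_cells_sdiff.mp hxb))) hai hib
      rw [mem_coe_cells_sdiff] at hj hj'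
      have := μ.rowLen_anti i (i + 1) (by omega)
      have := ν.rowLen_anti i (i + 1) (by omega)
      by_contra
      apply hsq i (ν.rowLen i)
      simp only [mem_cells_sdiff]
      dsimp only at hj hj' ⊢
      omega
    · have := mem_cells_sdiff.mp hxb
      omega
    · have := rowLen_le_of_le hsub i
      by_contra
      have hmem : (i, ν.rowLen i) ∈ μ.cells \ ν.cells := mem_cells_sdiff.mpr (by dsimp only; omega)
      have := hmin _ hmem
      have := hmax _ hmem
      dsimp only at *
      omega
  exact ⟨xa.1, xb.1, hrows, by have := hrows.card_cells_sdiff; omega⟩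

lemma IsRibbonOf.ncard_cellColor_eq_one {r : ℕ} (h : IsRibbonOf r μ ν) (hr : 0 < r) (i : ZMod r) :
    {x : ℕ × ℕ | x ∈ μ ∧ x ∉ ν ∧ cellColor r x = i}.ncard = 1 := by
  obtain ⟨a, b, hrows, hlen⟩ := h.exists_isRibbonOnRows hr
  exact hrows.ncard_cellColor_eq_one hr hlen i

lemma IsRibbonOf.exists_betaSet_eq {r : ℕ} (h : IsRibbonOf r μ ν) (hr : 0 < r) :
    ∃ s ∈ betaSet μ, s - r ∉ betaSet μ ∧ betaSet ν = insert (s - r) (betaSet μ \ {s}) := by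
  obtain ⟨a, b, hrows, hlen⟩ := h.exists_isRibbonOnRows hr
  have hνb : ν.beta b = μ.beta a - r := by omega
  exact ⟨μ.beta a, μ.beta_mem_betaSet a, hνb ▸ hrows.beta_notMem_betaSet, hνb ▸ hrows.betaSet_eq⟩

lemma IsRCore.pos {r : ℕ} (h : IsRCore r μ) : 0 < r := by
  exact Nat.pos_of_ne_zero fun hr => h μ ⟨subset_rfl, by simp [hr], fun x hx => (hx.2 hx.1).elim,
    by simp⟩

lemma IsRCore.sub_mem_betaSet {r : ℕ} (h : IsRCore r μ) {s : ℤ} (hs : s ∈ betaSet μ) :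
    s - r ∈ betaSet μ := by
  by_contra hsr
  obtain ⟨ν, hν⟩ := exists_isRibbonOf h.pos hs hsr
  exact h ν hν

def quotPairs (r : ℕ) (B : Set ℤ) : Set (ℤ × ℤ) :=
  {p | p.1 ∈ B ∧ p.2 ∉ B ∧ p.2 < p.1 ∧ (r : ℤ) ∣ p.1 - p.2}

lemma quotTotal_eq_ncard_quotPairs (r : ℕ) (μ : YoungDiagram) :
    quotTotal r μ = (quotPairs r (betaSet μ)).ncard := rfl

lemma quotPairs_betaSet_finite (r : ℕ) (μ : YoungDiagram) : (quotPairs r (betaSet μ)).Finite := by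
  refine ((Set.finite_Icc (-(μ.colLen 0 : ℤ)) (μ.beta 0)).prod
    (Set.finite_Icc (-(μ.colLen 0 : ℤ)) (μ.beta 0))).subset ?_
  rintro ⟨x, y⟩ ⟨hx, hy, hyx, -⟩
  obtain ⟨i, rfl⟩ := mem_betaSet.mp hx
  have := μ.beta_le_beta_zero i
  have : -(μ.colLen 0 : ℤ) ≤ y := not_lt.mp fun h => hy (mem_betaSet_of_lt h)
  simp only [Set.mem_prod, Set.mem_Icc]
  omega

lemma quotPairs_eq_empty {r : ℕ} {B : Set ℤ} (hB : ∀ s ∈ B, s - r ∈ B) : quotPairs r B = ∅ := by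
  refine Set.eq_empty_of_forall_notMem fun ⟨x, y⟩ ⟨hx, hy, hyx, k, hk⟩ => hy ?_
  have hmem : ∀ n : ℕ, x - r * n ∈ B := fun n => by
    induction n with
    | zero => simpa using hx
    | succ n ih => simpa [mul_add, sub_add_eq_sub_sub] using hB _ ih
  obtain ⟨n, rfl⟩ := Int.eq_ofNat_of_zero_le (show 0 ≤ k by
    dsimp only at hyx hk
    nlinarith [(Nat.cast_nonneg r : (0 : ℤ) ≤ r)])
  convert hmem n using 1
  dsimp only at hk
  linarith

section Swap

variable {r : ℕ} {s : ℤ}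

lemma swap_mem_iff {B : Set ℤ} (hr : 0 < r) (hs : s ∈ B) (hsr : s - r ∉ B) (x : ℤ) :
    Equiv.swap s (s - r) x ∈ B ↔ x ∈ insert (s - r) (B \ {s}) := by
  simp only [Equiv.swap_apply_def, Set.mem_insert_iff, Set.mem_sdiff, Set.mem_singleton_iff]
  split_ifs <;> grind

lemma dvd_swap_sub_swap_iff (x y : ℤ) :
    (r : ℤ) ∣ Equiv.swap s (s - r) x - Equiv.swap s (s - r) y ↔ (r : ℤ) ∣ x - y := by
  have hσ : ∀ z, (r : ℤ) ∣ Equiv.swap s (s - r) z - z := fun z => by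
    simp only [Equiv.swap_apply_def]
    split_ifs with h1 h2
    · exact ⟨-1, by rw [h1]; ring⟩
    · exact ⟨1, by rw [h2]; ring⟩
    · simp
  rw [show ∀ a b : ℤ, a - b = (x - y) + ((a - x) - (b - y)) by intros; ring]
  exact dvd_add_left (dvd_sub (hσ x) (hσ y))

lemma swap_lt_swap_iff {x y : ℤ} (hx : x ≠ s) (hy : y ≠ s - r) (hxy : (r : ℤ) ∣ x - y) :
    Equiv.swap s (s - r) y < Equiv.swap s (s - r) x ∧
      ¬(Equiv.swap s (s - r) x = s ∧ Equiv.swap s (s - r) y = s - r) ↔ y < x := by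
  have hgap : y < x + r → y ≤ x := fun h => by
    by_contra
    have := Int.le_of_dvd (by omega) (dvd_sub_comm.mp hxy)
    omega
  simp only [Equiv.swap_apply_def]
  split_ifs <;> omega

lemma quotPairs_insert_sub_eq_image {B : Set ℤ} (hr : 0 < r) (hs : s ∈ B) (hsr : s - r ∉ B) :
    quotPairs r (insert (s - r) (B \ {s})) =
      Equiv.prodCongr (Equiv.swap s (s - r)) (Equiv.swap s (s - r)) ''
        (quotPairs r B \ {(s, s - r)}) := by
  rw [Equiv.image_eq_preimage_symm, Equiv.prodCongr_symm, Equiv.symm_swap]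
  ext ⟨x, y⟩
  simp only [quotPairs, Set.mem_preimage, Equiv.prodCongr_apply, Prod.map, Set.mem_sdiff,
    Set.mem_singleton_iff, Set.mem_ofPred_eq, Prod.mk.injEq, swap_mem_iff hr hs hsr,
    dvd_swap_sub_swap_iff]
  have hxs : x ∈ insert (s - r) (B \ {s}) → x ≠ s := by
    rintro (h | ⟨-, h⟩) rfl
    · omega
    · exact h rfl
  have hys : y ∉ insert (s - r) (B \ {s}) → y ≠ s - r := fun h e => h (.inl e)
  constructor
  · rintro ⟨h1, h2, h3, h4⟩
    have := (swap_lt_swap_iff (hxs h1) (hys h2) h4).2 h3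
    exact ⟨⟨h1, h2, this.1, h4⟩, this.2⟩
  · rintro ⟨⟨h1, h2, h3, h4⟩, h5⟩
    exact ⟨h1, h2, (swap_lt_swap_iff (hxs h1) (hys h2) h4).1 ⟨h3, h5⟩, h4⟩

end Swap

lemma ncard_quotPairs_insert_sub_add_one {r : ℕ} (hr : 0 < r) {B : Set ℤ} {s : ℤ} (hs : s ∈ B)
    (hsr : s - r ∉ B) (hfin : (quotPairs r B).Finite) :
    (quotPairs r (insert (s - r) (B \ {s}))).ncard + 1 = (quotPairs r B).ncard := by
  rw [quotPairs_insert_sub_eq_image hr hs hsr, (Equiv.injective _).injOn.ncard_image]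
  exact Set.ncard_sdiff_singleton_add_one ⟨hs, hsr, by omega, ⟨1, by ring⟩⟩ hfin

lemma IsRibbonOf.quotTotal_add_one {r : ℕ} (h : IsRibbonOf r μ ν) (hr : 0 < r) :
    quotTotal r ν + 1 = quotTotal r μ := by
  obtain ⟨s, hs, hsr, hν⟩ := h.exists_betaSet_eq hr
  rw [quotTotal_eq_ncard_quotPairs, quotTotal_eq_ncard_quotPairs, hν]
  exact ncard_quotPairs_insert_sub_add_one hr hs hsr (quotPairs_betaSet_finite r μ)

lemma IsRCore.quotTotal_eq_zero {r : ℕ} (h : IsRCore r μ) : quotTotal r μ = 0 := by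
  rw [quotTotal_eq_ncard_quotPairs, quotPairs_eq_empty fun _ => h.sub_mem_betaSet,
    Set.ncard_empty]

lemma le_of_reflTransGen_isRibbonOf {r : ℕ}
    (h : Relation.ReflTransGen (fun a b => IsRibbonOf r a b) μ ν) : ν ≤ μ := by
  induction h with
  | refl => exact le_rfl
  | tail _ hstep ih => exact (hstep.1 : _ ≤ _).trans ih

lemma ncard_cellColor_add_ncard_cellColor {r : ℕ} {c : YoungDiagram} (hνμ : ν ≤ μ) (hcν : c ≤ ν)
    (i : ZMod r) :
    {x : ℕ × ℕ | x ∈ μ ∧ x ∉ ν ∧ cellColor r x = i}.ncard +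
      {x : ℕ × ℕ | x ∈ ν ∧ x ∉ c ∧ cellColor r x = i}.ncard =
      {x : ℕ × ℕ | x ∈ μ ∧ x ∉ c ∧ cellColor r x = i}.ncard := by
  rw [← Set.ncard_union_eq (Set.disjoint_left.mpr fun x hx hx' => hx.2.1 hx'.1)
    (μ.cells.finite_toSet.subset fun x hx => hx.1) (ν.cells.finite_toSet.subset fun x hx => hx.1)]
  congr 1
  ext x
  have := @hνμ x
  have := @hcν x
  simp only [Set.mem_union, Set.mem_ofPred_eq]
  tauto

lemma ncard_cellColor_add_quotTotal {r : ℕ} (hr : 0 < r) {c : YoungDiagram}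
    (h : Relation.ReflTransGen (fun a b => IsRibbonOf r a b) μ c) (i : ZMod r) :
    {x : ℕ × ℕ | x ∈ μ ∧ x ∉ c ∧ cellColor r x = i}.ncard + quotTotal r c = quotTotal r μ := by
  induction h using Relation.ReflTransGen.head_induction_on with
  | refl =>
    have : {x : ℕ × ℕ | x ∈ c ∧ x ∉ c ∧ cellColor r x = i} = ∅ :=
      Set.eq_empty_of_forall_notMem fun x hx => hx.2.1 hx.1
    rw [this, Set.ncard_empty, zero_add]
  | head hstep hrest ih =>
    rw [← ncard_cellColor_add_ncard_cellColor hstep.1 (le_of_reflTransGen_isRibbonOf hrest),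
      hstep.ncard_cellColor_eq_one hr, ← hstep.quotTotal_add_one hr, ← ih]
    ring

end

theorem skew_core_color_count_general (r : ℕ) (μ c : YoungDiagram)
    (h : ReachesCore r μ c) (i : ZMod r) :
    {x : ℕ × ℕ | x ∈ μ ∧ x ∉ c ∧ cellColor r x = i}.ncard = quotTotal r μ := by
  obtain ⟨hsteps, hcore⟩ := h
  simpa [hcore.quotTotal_eq_zero] using ncard_cellColor_add_quotTotal hcore.pos hsteps i

/-- For every color `i`, the number of cells of color `i` in `λ / core_r(λ)`
equals the total size of the `r`-quotient of `λ` (in particular, it is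
independent of `i`). -/
theorem skew_core_color_count (r : ℕ) (hr : 2 ≤ r) (μ c : YoungDiagram)
    (h : ReachesCore r μ c) (i : ZMod r) :
    {x : ℕ × ℕ | x ∈ μ ∧ x ∉ c ∧ cellColor r x = i}.ncard = quotTotal r μ :=
  skew_core_color_count_general r μ c h i
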